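/- Let f(x) = ax/((a−1)x+1) and g(x) = bx/((b−1)x+1) on [0,1] with a, b > 0. The orbit of any x ∈ (0,1) under the semigroup generated by f and g is dense in [0,1] if and only if (a > 1 > b or b > 1 > a) and log b / log a is irrational. -/

import Mathlib

/-!
The logistic function `σ = Real.sigmoid` conjugates `x ↦ a x / ((a - 1) x + 1)` to the
translation `t ↦ t + log a`. Hence the orbit of `σ t` is `σ (t + S)`, where `S` is the additive
semigroup generated by `log a` and `log b`, and all orbits are dense in `[0, 1]` exactly when `S`
is dense in `ℝ`. If `log a` and `log b` have the same sign, `S` lies in a half-line; if their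
ratio is rational, `S` lies in a cyclic group. Conversely, Dirichlet's approximation theorem
gives arbitrarily small nonzero elements of `S`, and together with an element of `S` of the
opposite sign their multiples come arbitrarily close to every real number.
-/

open Real Set Topology Pointwise

lemma sigmoid_add_log {a : ℝ} (ha : 0 < a) (t : ℝ) :
    sigmoid (t + log a) = a * sigmoid t / ((a - 1) * sigmoid t + 1) := by
  have he := exp_pos (-t)
  have hden : (a - 1) * (1 + exp (-t))⁻¹ + 1 = (a + exp (-t)) / (1 + exp (-t)) := by
    field_simp; ring
  rw [sigmoid_def, sigmoid_def, hden, neg_add, exp_add, exp_neg (log a), exp_log ha]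
  field_simp

lemma Icc_subset_closure_image_sigmoid_iff {A : Set ℝ} :
    Icc 0 1 ⊆ closure (sigmoid '' A) ↔ Dense A := by
  have hσ : IsEmbedding sigmoid :=
    (IsEmbedding.subtypeVal.comp isEmbedding_sigmoid : IsEmbedding (Subtype.val ∘ _))
  rw [dense_iff_closure_eq, hσ.closure_eq_preimage_closure_image A, preimage_eq_univ_iff,
    range_sigmoid, ← closure_Ioo zero_ne_one, isClosed_closure.closure_subset_iff]

section Words

variable {X A : Type*} [AddCommMonoid A] (f g : X → X)

def wordOrbit (x : X) : Set X :=
  {y | ∃ w : List Bool, w ≠ [] ∧ y = w.foldr (fun s z => if s then f z else g z) x}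

variable {f g} {h : A → X} {α β : A}

lemma foldr_semiconj (hf : ∀ t, f (h t) = h (t + α)) (hg : ∀ t, g (h t) = h (t + β))
    (w : List Bool) (t : A) :
    w.foldr (fun s z => if s then f z else g z) (h t)
      = h (t + (w.count true • α + w.count false • β)) := by
  induction w with
  | nil => simp
  | cons s w ih => cases s <;> simp [ih, hf, hg, add_nsmul] <;> congr 1 <;> abel

lemma wordOrbit_subset_image (hf : ∀ t, f (h t) = h (t + α)) (hg : ∀ t, g (h t) = h (t + β))
    (t : A) : wordOrbit f g (h t) ⊆ h '' (t +ᵥ (AddSubmonoid.closure {α, β} : Set A)) := by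
  rintro _ ⟨w, -, rfl⟩
  rw [foldr_semiconj hf hg]
  exact mem_image_of_mem h
    (vadd_mem_vadd_set ((AddSubmonoid.mem_closure_pair _ _ _).2 ⟨_, _, rfl⟩))

lemma image_subset_wordOrbit (hf : ∀ t, f (h t) = h (t + α)) (hg : ∀ t, g (h t) = h (t + β))
    (t : A) :
    h '' (t +ᵥ ((AddSubmonoid.closure {α, β} : Set A) \ {0})) ⊆ wordOrbit f g (h t) := by
  rintro _ ⟨_, ⟨c, ⟨hc, hc0⟩, rfl⟩, rfl⟩
  obtain ⟨m, n, rfl⟩ := (AddSubmonoid.mem_closure_pair _ _ _).1 hc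
  refine ⟨List.replicate m true ++ List.replicate n false, fun hnil => ?_, ?_⟩
  · simp_all
  · rw [foldr_semiconj hf hg]
    simp [List.count_replicate]

end Words

section Density

variable {K : Type*} [Field K] [LinearOrder K] [IsStrictOrderedRing K] [FloorSemiring K]
  [TopologicalSpace K] [OrderTopology K]

lemma AddSubmonoid.dense_of_neg_mem_of_forall_exists_pos_lt (M : AddSubmonoid K) {y : K}
    (hyM : y ∈ M) (hy : y < 0) (hsmall : ∀ ε > 0, ∃ x ∈ M, 0 < x ∧ x < ε) :
    Dense (M : Set K) := by
  refine dense_of_exists_between fun a b hab => ?_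
  obtain ⟨x, hxM, hx, hxb⟩ := hsmall (b - a) (sub_pos.2 hab)
  -- step below `a` with `y`, then climb back above `a` with steps `x < b - a`
  set N := ⌈a / y⌉₊
  have hN : N * y ≤ a := (div_le_iff_of_neg hy).1 (Nat.le_ceil _)
  set k := ⌊(a - N * y) / x⌋₊
  have hk_le : k * x ≤ a - N * y :=
    (le_div_iff₀ hx).1 (Nat.floor_le (div_nonneg (sub_nonneg.2 hN) hx.le))
  have hk_lt : a - N * y < (k + 1) * x := (div_lt_iff₀ hx).1 (Nat.lt_floor_add_one _)
  refine ⟨N • y + (k + 1) • x, add_mem (nsmul_mem hyM N) (nsmul_mem hxM (k + 1)), ?_, ?_⟩ <;>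
    simp only [nsmul_eq_mul, Nat.cast_add, Nat.cast_one] <;> linarith

lemma AddSubmonoid.dense_of_forall_exists_ne_zero_abs_lt (M : AddSubmonoid K) {x y : K}
    (hxM : x ∈ M) (hx : 0 < x) (hyM : y ∈ M) (hy : y < 0)
    (hsmall : ∀ ε > 0, ∃ z ∈ M, z ≠ 0 ∧ |z| < ε) : Dense (M : Set K) := by
  by_cases hpos : ∀ ε > 0, ∃ z ∈ M, 0 < z ∧ z < ε
  · exact M.dense_of_neg_mem_of_forall_exists_pos_lt hyM hy hpos
  -- otherwise the small elements are eventually negative, and `-M` has small positive ones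
  push Not at hpos
  obtain ⟨ε₀, hε₀, hgap⟩ := hpos
  have hneg : Dense ((-M : AddSubmonoid K) : Set K) := by
    refine (-M).dense_of_neg_mem_of_forall_exists_pos_lt (y := -x) (by simpa) (by simpa)
      fun ε hε => ?_
    obtain ⟨z, hzM, hz0, hz⟩ := hsmall (min ε ε₀) (lt_min hε hε₀)
    have hz_neg : z < 0 := by
      refine hz0.lt_of_le (not_lt.1 fun hz_pos => ?_)
      have := hgap z hzM hz_pos
      have := (le_abs_self z).trans_lt (hz.trans_le (min_le_right _ _))
      linarith
    refine ⟨-z, by simpa, neg_pos.2 hz_neg, ?_⟩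
    rw [← abs_of_neg hz_neg]
    exact hz.trans_le (min_le_left _ _)
  simpa using hneg.preimage (Homeomorph.neg K).isOpenMap

end Density

lemma exists_mem_addSubmonoidClosure_pair_ne_zero_abs_lt {α β : ℝ} (hα : 0 < α) (hβ : β < 0)
    (h : Irrational (β / α)) {ε : ℝ} (hε : 0 < ε) :
    ∃ z ∈ AddSubmonoid.closure {α, β}, z ≠ 0 ∧ |z| < ε := by
  set ξ := -(β / α)
  have hξ : 0 < ξ := neg_pos.2 (div_neg_of_neg_of_pos hβ hα)
  obtain ⟨n, hn⟩ := exists_nat_gt (α / ε)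
  have hn0 : 0 < n := by exact_mod_cast (div_pos hα hε).trans hn
  -- Dirichlet's approximation theorem
  obtain ⟨j, k, hk, -, hjk⟩ := Real.exists_int_int_abs_mul_sub_le ξ hn0
  have hj : 0 ≤ j := by
    have h1 : (1 : ℝ) / (n + 1) < 1 := by
      rw [div_lt_one (by positivity)]; exact_mod_cast Nat.lt_add_of_pos_left hn0
    have h2 : (0 : ℝ) < k * ξ := mul_pos (by exact_mod_cast hk) hξ
    have : (-1 : ℤ) < j := by
      exact_mod_cast (by linarith [(le_abs_self _).trans hjk] : (-1 : ℝ) < j)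
    omega
  lift j to ℕ using hj
  lift k to ℕ using hk.le
  push_cast at hjk
  have hz : (j : ℝ) * α + k * β = -α * (k * ξ - j) := by simp only [ξ]; field_simp; ring
  refine ⟨j • α + k • β, (AddSubmonoid.mem_closure_pair _ _ _).2 ⟨j, k, rfl⟩, ?_, ?_⟩
  · rw [nsmul_eq_mul, nsmul_eq_mul, hz]
    exact mul_ne_zero (neg_ne_zero.2 hα.ne')
      (sub_ne_zero.2 ((h.neg.natCast_mul (by exact_mod_cast hk.ne')).ne_nat j))
  · rw [nsmul_eq_mul, nsmul_eq_mul, hz, abs_mul, abs_neg, abs_of_pos hα]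
    calc α * |k * ξ - j| ≤ α * (1 / (n + 1)) := by gcongr
      _ < ε := by
        rw [div_lt_iff₀ hε] at hn
        rw [mul_one_div, div_lt_iff₀ (by positivity)]
        nlinarith

lemma dense_addSubmonoidClosure_pair {α β : ℝ} (hα : 0 < α) (hβ : β < 0)
    (h : Irrational (β / α)) : Dense (AddSubmonoid.closure {α, β} : Set ℝ) :=
  (AddSubmonoid.closure {α, β}).dense_of_forall_exists_ne_zero_abs_lt
    (AddSubmonoid.subset_closure (by simp)) hα (AddSubmonoid.subset_closure (by simp)) hβ
    fun _ hε => exists_mem_addSubmonoidClosure_pair_ne_zero_abs_lt hα hβ h hε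

theorem dense_addSubmonoidClosure_pair_iff {α β : ℝ} :
    Dense (AddSubmonoid.closure {α, β} : Set ℝ) ↔
      ((0 < α ∧ β < 0) ∨ (0 < β ∧ α < 0)) ∧ Irrational (β / α) := by
  constructor
  · intro hD
    refine ⟨?_, ?_⟩
    · obtain ⟨_, hxM, hx⟩ := hD.exists_gt 0
      obtain ⟨_, hyM, hy⟩ := hD.exists_lt 0
      obtain ⟨m, n, rfl⟩ := (AddSubmonoid.mem_closure_pair _ _ _).1 hxM
      obtain ⟨m', n', rfl⟩ := (AddSubmonoid.mem_closure_pair _ _ _).1 hyM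
      have hpos : 0 < α ∨ 0 < β := by
        by_contra! h
        linarith [add_nonpos (nsmul_nonpos h.1 m) (nsmul_nonpos h.2 n)]
      have hneg : α < 0 ∨ β < 0 := by
        by_contra! h
        linarith [add_nonneg (nsmul_nonneg h.1 m') (nsmul_nonneg h.2 n')]
      grind
    · rw [← dense_addSubgroupClosure_pair_iff, pair_comm]
      exact hD.mono (AddSubmonoid.closure_le.2 AddSubgroup.subset_closure)
  · rintro ⟨⟨hα, hβ⟩ | ⟨hβ, hα⟩, h⟩
    · exact dense_addSubmonoidClosure_pair hα hβ h
    · rw [pair_comm]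
      exact dense_addSubmonoidClosure_pair hβ hα (by simpa using h.inv)

/-- for f(x) = ax/((a−1)x+1) and g(x) = bx/((b−1)x+1) on [0,1],
orbits in (0,1) are dense iff (a > 1 > b or b > 1 > a) and log b / log a is
irrational. -/
theorem stmt_10 (a b : ℝ) (ha : 0 < a) (hb : 0 < b)
    (f g : ℝ → ℝ)
    (hf : ∀ x : ℝ, f x = a * x / ((a - 1) * x + 1))
    (hg : ∀ x : ℝ, g x = b * x / ((b - 1) * x + 1)) :
    (∀ x ∈ Set.Ioo (0:ℝ) 1, Set.Icc (0:ℝ) 1 ⊆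
        closure {y | ∃ w : List Bool, w ≠ [] ∧
          y = w.foldr (fun s z => if s then f z else g z) x})
      ↔ (((1 < a ∧ b < 1) ∨ (1 < b ∧ a < 1)) ∧
          Irrational (Real.log b / Real.log a)) := by
  have hfσ : ∀ t, f (sigmoid t) = sigmoid (t + log a) := fun t => by
    rw [hf, sigmoid_add_log ha]
  have hgσ : ∀ t, g (sigmoid t) = sigmoid (t + log b) := fun t => by
    rw [hg, sigmoid_add_log hb]
  rw [← log_pos_iff ha.le, ← log_pos_iff hb.le, ← log_neg_iff ha, ← log_neg_iff hb,
    ← dense_addSubmonoidClosure_pair_iff]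
  change (∀ x ∈ Ioo (0 : ℝ) 1, Icc 0 1 ⊆ closure (wordOrbit f g x)) ↔ _
  constructor
  · intro h
    have h0 := (h (sigmoid 0) ⟨sigmoid_pos 0, sigmoid_lt_one 0⟩).trans
      (closure_mono (wordOrbit_subset_image hfσ hgσ 0))
    simpa using Icc_subset_closure_image_sigmoid_iff.1 h0
  · intro hM x hx
    obtain ⟨t, rfl⟩ : x ∈ range sigmoid := by rwa [range_sigmoid]
    exact (Icc_subset_closure_image_sigmoid_iff.2 ((hM.sdiff_singleton 0).vadd t)).trans
      (closure_mono (image_subset_wordOrbit hfσ hgσ t))
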